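/- If G is a 14-regular graph on n vertices, then γ_{2,2}(G) ≤ n/2. -/

import Mathlib

open SimpleGraph Finset

def IsAbDom {V : Type*} [Fintype V] [DecidableEq V] (G : SimpleGraph V)
    [DecidableRel G.Adj] (a b : ℕ) (S : Finset V) : Prop :=
  (∀ v ∈ S, a ≤ (G.neighborFinset v ∩ S).card) ∧
  (∀ v ∉ S, b ≤ (G.neighborFinset v ∩ S).card)

/-
Choose `R` at random, each vertex independently with probability `2/5`, and then add two
neighbours of every vertex that has fewer than two neighbours in `R`. The result is
(2,2)-dominating, of expected size at most `2n/5 + 2n · P(Bin(14, 2/5) ≤ 1) =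
2n/5 + 2n · (3^14 + 14 · 2 · 3^13) / 5^14 < n/2`. The expectations are computed exactly as
weighted counts over all subsets `R`, with weight `2^|R| 3^(n - |R|)`.
-/

namespace Finset

variable {V M : Type*} [Fintype V] [DecidableEq V] [CommSemiring M]

theorem sum_inter_mul_sdiff (A : Finset V) (F G : Finset V → M) :
    ∑ R : Finset V, F (A ∩ R) * G (R \ A) =
      (∑ P ∈ A.powerset, F P) * ∑ Q ∈ Aᶜ.powerset, G Q := by
  rw [sum_mul_sum, ← sum_product']
  refine sum_nbij' (fun R => (A ∩ R, R \ A)) (fun PQ => PQ.1 ∪ PQ.2) ?_ ?_ ?_ ?_ ?_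
  · intro R _
    simp [inter_subset_left, subset_compl_iff_disjoint_left, disjoint_sdiff]
  · simp
  · intro R _
    rw [inter_comm, union_comm, sdiff_union_inter]
  · rintro ⟨P, Q⟩ h
    simp only [mem_product, mem_powerset] at h
    ext x <;> simp <;> grind [mem_compl]
  · simp

theorem sum_pow_mul_pow_mul_card_inter (a b : M) (A : Finset V) (f : ℕ → M) :
    ∑ R : Finset V, a ^ #R * b ^ (Fintype.card V - #R) * f #(A ∩ R) =
      (∑ j ∈ range (#A + 1), (#A).choose j • (a ^ j * b ^ (#A - j) * f j)) *
        (a + b) ^ (Fintype.card V - #A) := by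
  have hsplit : ∀ R : Finset V, a ^ #R * b ^ (Fintype.card V - #R) * f #(A ∩ R) =
      (a ^ #(A ∩ R) * b ^ (#A - #(A ∩ R)) * f #(A ∩ R)) *
        (a ^ #(R \ A) * b ^ (#Aᶜ - #(R \ A))) := by
    intro R
    have hR : #(A ∩ R) + #(R \ A) = #R := by
      rw [inter_comm]; exact card_inter_add_card_sdiff R A
    have hAR : #(A ∩ R) ≤ #A := card_le_card inter_subset_left
    have hRA : #(R \ A) ≤ #Aᶜ :=
      card_le_card (by simp [subset_compl_iff_disjoint_right, disjoint_sdiff_self_left])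
    have hA : #A + #Aᶜ = Fintype.card V := card_add_card_compl A
    rw [← hR, pow_add, show Fintype.card V - (#(A ∩ R) + #(R \ A)) =
      (#A - #(A ∩ R)) + (#Aᶜ - #(R \ A)) by omega, pow_add]
    ring
  rw [sum_congr rfl fun R _ => hsplit R,
    sum_inter_mul_sdiff A
      (fun P => a ^ #P * b ^ (#A - #P) * f #P) (fun Q => a ^ #Q * b ^ (#Aᶜ - #Q)),
    sum_powerset_apply_card (fun j => a ^ j * b ^ (#A - j) * f j), sum_pow_mul_eq_add_pow,
    card_compl]

theorem sum_pow_mul_pow_mul_card_filter (a b : M) (A : V → Finset V) (p : ℕ → Prop)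
    [DecidablePred p] :
    ∑ R : Finset V, a ^ #R * b ^ (Fintype.card V - #R) * (#{v | p #(A v ∩ R)} : M) =
      ∑ v, (∑ j ∈ range (#(A v) + 1) with p j,
          (#(A v)).choose j • (a ^ j * b ^ (#(A v) - j))) *
        (a + b) ^ (Fintype.card V - #(A v)) := by
  simp_rw [natCast_card_filter, mul_sum]
  rw [sum_comm]
  refine sum_congr rfl fun v _ => ?_
  rw [sum_pow_mul_pow_mul_card_inter a b (A v) (fun j => if p j then 1 else 0), sum_filter]
  simp

theorem sum_pow_mul_pow_mul_card (a b : M) :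
    ∑ R : Finset V, a ^ #R * b ^ (Fintype.card V - #R) * #R =
      Fintype.card V * (a * (a + b) ^ (Fintype.card V - 1)) := by
  have h := sum_pow_mul_pow_mul_card_filter a b (fun v : V => {v}) (0 < ·)
  have hcard : ∀ R : Finset V, #{v | 0 < #({v} ∩ R)} = #R := fun R => by
    simp [singleton_inter, apply_ite card, Nat.pos_iff_ne_zero]
  simp only [hcard] at h
  simpa [sum_filter, sum_range_succ] using h

end Finset

theorem exists_le_of_sum_mul_le {ι R : Type*} [Semiring R] [LinearOrder R] [IsStrictOrderedRing R]
    {s : Finset ι} (hs : s.Nonempty) {w f : ι → R} (hw : ∀ i ∈ s, 0 < w i) {c : R}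
    (h : ∑ i ∈ s, w i * f i ≤ ∑ i ∈ s, w i * c) : ∃ i ∈ s, f i ≤ c := by
  obtain ⟨i, hi, hle⟩ := Finset.exists_le_of_sum_le hs h
  exact ⟨i, hi, le_of_mul_le_mul_left hle (hw i hi)⟩

namespace SimpleGraph

variable {V : Type*} [Fintype V] [DecidableEq V] (G : SimpleGraph V) [DecidableRel G.Adj]

def undercovered (k : ℕ) (R : Finset V) : Finset V :=
  {v | #(G.neighborFinset v ∩ R) < k}

theorem sum_pow_mul_pow_mul_card_undercovered {M : Type*} [CommSemiring M] (a b : M) {d : ℕ}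
    (hreg : G.IsRegularOfDegree d) (k : ℕ) :
    ∑ R : Finset V, a ^ #R * b ^ (Fintype.card V - #R) * #(G.undercovered k R) =
      Fintype.card V *
        ((∑ j ∈ range (d + 1) with j < k, d.choose j • (a ^ j * b ^ (d - j))) *
          (a + b) ^ (Fintype.card V - d)) := by
  have hdeg : ∀ v, #(G.neighborFinset v) = d := fun v =>
    (G.card_neighborFinset_eq_degree v).trans (hreg v)
  unfold undercovered
  simp only [sum_pow_mul_pow_mul_card_filter a b (fun v => G.neighborFinset v) (· < k), hdeg]
  simp

theorem exists_isAbDom_card_le {k : ℕ} (hdeg : ∀ v, k ≤ G.degree v) (R : Finset V) :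
    ∃ S, IsAbDom G k k S ∧ #S ≤ #R + k * #(G.undercovered k R) := by
  have hpick : ∀ v, ∃ t ⊆ G.neighborFinset v, #t = k := fun v =>
    exists_subset_card_eq (by rw [card_neighborFinset_eq_degree]; exact hdeg v)
  choose pick hpick_sub hpick_card using hpick
  set S := R ∪ (G.undercovered k R).biUnion pick
  have hcover : ∀ v, k ≤ #(G.neighborFinset v ∩ S) := by
    intro v
    by_cases hv : v ∈ G.undercovered k R
    · calc k = #(pick v) := (hpick_card v).symm
        _ ≤ #(G.neighborFinset v ∩ S) := card_le_card fun x hx =>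
          mem_inter.2 ⟨hpick_sub v hx, mem_union_right _ (mem_biUnion.2 ⟨v, hv, hx⟩)⟩
    · simp only [undercovered, mem_filter, mem_univ, true_and, not_lt] at hv
      exact hv.trans (card_le_card (inter_subset_inter_left subset_union_left))
  refine ⟨S, ⟨fun v _ => hcover v, fun v _ => hcover v⟩, ?_⟩
  calc #S ≤ #R + #((G.undercovered k R).biUnion pick) := card_union_le _ _
    _ ≤ #R + ∑ v ∈ G.undercovered k R, #(pick v) := by grw [card_biUnion_le]
    _ = #R + k * #(G.undercovered k R) := by simp [hpick_card, mul_comm]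

theorem exists_card_add_two_mul_card_undercovered_le (hreg : G.IsRegularOfDegree 14) :
    ∃ R : Finset V, 2 * (#R + 2 * #(G.undercovered 2 R)) ≤ Fintype.card V := by
  set n := Fintype.card V
  have hn : n = 0 ∨ 14 < n := by
    rcases isEmpty_or_nonempty V with hV | ⟨⟨v⟩⟩
    · exact Or.inl Fintype.card_eq_zero
    · exact Or.inr (hreg v ▸ G.degree_lt_card_verts v)
  suffices h : ∑ R : Finset V, 2 ^ #R * 3 ^ (n - #R) * (2 * (#R + 2 * #(G.undercovered 2 R))) ≤
      ∑ R : Finset V, 2 ^ #R * 3 ^ (n - #R) * n by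
    obtain ⟨R, -, hR⟩ := exists_le_of_sum_mul_le univ_nonempty (fun R _ => by positivity) h
    exact ⟨R, hR⟩
  calc ∑ R : Finset V, 2 ^ #R * 3 ^ (n - #R) * (2 * (#R + 2 * #(G.undercovered 2 R)))
      = 2 * ∑ R : Finset V, 2 ^ #R * 3 ^ (n - #R) * #R +
          4 * ∑ R : Finset V, 2 ^ #R * 3 ^ (n - #R) * #(G.undercovered 2 R) := by
        rw [mul_sum, mul_sum, ← sum_add_distrib]
        exact sum_congr rfl fun R _ => by ring
    _ = 2 * (n * (2 * 5 ^ (n - 1))) + 4 * (n * ((3 ^ 14 + 14 * 2 * 3 ^ 13) * 5 ^ (n - 14))) := by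
        have hR := sum_pow_mul_pow_mul_card (V := V) 2 3
        have hU := G.sum_pow_mul_pow_mul_card_undercovered 2 3 hreg 2
        simp only [Nat.cast_id] at hR hU
        rw [hR, hU]
        norm_num [n, sum_filter, sum_range_succ]
    _ ≤ n * 5 ^ n := by
        obtain hn | hn := hn
        · simp [hn]
        obtain ⟨m, hm⟩ : ∃ m, n = m + 15 := ⟨n - 15, by omega⟩
        simp only [hm, show m + 15 - 1 = m + 14 by omega, show m + 15 - 14 = m + 1 by omega,
          pow_add]
        nlinarith [pow_pos (show 0 < 5 by norm_num) m]
    _ = ∑ R : Finset V, 2 ^ #R * 3 ^ (n - #R) * n := by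
        rw [← sum_mul, Fintype.sum_pow_mul_eq_add_pow, mul_comm]

end SimpleGraph

theorem stmt14 {V : Type*} [Fintype V] [DecidableEq V] (G : SimpleGraph V) [DecidableRel G.Adj] (hreg : G.IsRegularOfDegree 14) :
    ∃ S : Finset V, IsAbDom G 2 2 S ∧ (S.card : ℝ) ≤ (Fintype.card V : ℝ) / 2 := by
  obtain ⟨R, hR⟩ := G.exists_card_add_two_mul_card_undercovered_le hreg
  obtain ⟨S, hS, hcard⟩ := G.exists_isAbDom_card_le (k := 2) (fun v => by simp [hreg v]) R
  refine ⟨S, hS, ?_⟩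
  rw [le_div_iff₀ two_pos]
  exact_mod_cast (by omega : S.card * 2 ≤ Fintype.card V)
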